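/- arXiv:2207.08078 — 3 statements merged into one kernel-verified Lean document; each statement's English description precedes it below -/
import Mathlib

section
/- Let cost1, cost2, sharedCost be nonnegative integers. Define h = (cost1 + cost2 + sharedCost)/2 (rounded up) if |cost1 - cost2| ≤ sharedCost, and h = max(cost1, cost2) otherwise. Then for any splitting of sharedCost into s1 + s2 = sharedCost with s1, s2 ≥ 0, we have h ≤ max(cost1 + s1, cost2 + s2). -/
/-- Admissibility of the manipulation-cost heuristic: for nonnegative integers
`cost1, cost2, sharedCost`, with `h = ⌈(cost1+cost2+sharedCost)/2⌉` when
`|cost1 - cost2| ≤ sharedCost` and `h = max cost1 cost2` otherwise, any splitting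
`s1 + s2 = sharedCost` satisfies `h ≤ max (cost1+s1) (cost2+s2)`. -/
theorem stmt0 (cost1 cost2 sharedCost : ℕ) (h : ℕ)
    (hdef : h = if |(cost1 : ℤ) - (cost2 : ℤ)| ≤ (sharedCost : ℤ)
      then (cost1 + cost2 + sharedCost + 1) / 2
      else max cost1 cost2) :
    ∀ s1 s2 : ℕ, s1 + s2 = sharedCost →
      h ≤ max (cost1 + s1) (cost2 + s2) := by
  intro s1 s2 hs
  subst hs
  simp only [Nat.max_def] at hdef ⊢
  split_ifs at hdef ⊢ <;> omega
end

section
/- For nonnegative integers cost1, cost2, sharedCost, the minimum over all splittings s1 + s2 = sharedCost (s1, s2 ≥ 0 integers) of max(cost1 + s1, cost2 + s2) equals max(max(cost1, cost2), ⌈(cost1 + cost2 + sharedCost)/2⌉). -/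
/-- Two-machine scheduling: the minimum over all splittings `s1 + s2 = sharedCost`
of `max (cost1+s1) (cost2+s2)` equals `max (max cost1 cost2) ⌈(cost1+cost2+sharedCost)/2⌉`. -/
theorem stmt3 (cost1 cost2 sharedCost : ℕ) :
    IsLeast {m : ℕ | ∃ s1 s2 : ℕ, s1 + s2 = sharedCost ∧
      m = max (cost1 + s1) (cost2 + s2)}
      (max (max cost1 cost2) ((cost1 + cost2 + sharedCost + 1) / 2)) := by
  constructor
  · refine ⟨min ((max (max cost1 cost2) ((cost1 + cost2 + sharedCost + 1) / 2)) - cost1) sharedCost,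
      sharedCost - min ((max (max cost1 cost2) ((cost1 + cost2 + sharedCost + 1) / 2)) - cost1) sharedCost,
      by omega, by omega⟩
  · rintro m ⟨s1, s2, h, rfl⟩
    omega
end

section
/- For a directed cycle of length k ≥ 3 in the dependency graph where each object's goal equals the next object's start (cyclically), any dual-arm plan in which each step consists of at most two simultaneous pick-n-places, and each placement target must be unoccupied after the picks of that step, must use at least one buffer placement (a placement at a pose that is neither that object's start nor goal). -/
/-- For a dependency cycle of length `k ≥ 3` (object `i` starts at pose `i` with goal
pose `i+1` cyclically), no dual-arm plan in which each step moves at most two objects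
simultaneously, every configuration is collision-free (injective), and every placement
is at the moved object's start or goal pose, can realize the rearrangement: at least one
buffer placement is required. -/
theorem stmt8 (k : ℕ) [NeZero k] (hk : 3 ≤ k) :
    ¬ ∃ (T : ℕ) (c : ℕ → Fin k → Fin k),
      c 0 = id ∧
      c T = (fun i => i + 1) ∧
      (∀ t, Function.Injective (c t)) ∧
      (∀ t < T, ∃ moved : Finset (Fin k), moved.card ≤ 2 ∧
        (∀ j, j ∉ moved → c (t + 1) j = c t j) ∧
        (∀ j ∈ moved, c (t + 1) j = j ∨ c (t + 1) j = j + 1)) := by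
  rintro ⟨T, c, h0, hT, hinj, hstep⟩
  have hone : (1 : Fin k) ≠ 0 := by
    have h1 : (1:ℕ) < k := by omega
    intro h
    rw [Fin.ext_iff] at h
    simp [Nat.mod_eq_of_lt h1] at h
  have hs : ∀ j : Fin k, j + 1 ≠ j := by
    intro j h
    apply hone
    have := congrArg (· - j) h
    simpa using this
  have key : ∀ t ≤ T, c t = id := by
    intro t ht
    induction t with
    | zero => exact h0
    | succ n ih =>
      have hid : c n = id := ih (by omega)
      obtain ⟨moved, hcard, hfix, hmv⟩ := hstep n (by omega)
      have hall : ∀ j, c (n+1) j = j ∨ c (n+1) j = j + 1 := by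
        intro j
        by_cases hj : j ∈ moved
        · exact hmv j hj
        · left; rw [hfix j hj, hid]; rfl
      open Fin.NatCast in
      by_cases hex : ∀ j, c (n+1) j = j
      · funext j; exact hex j
      · exfalso
        push_neg at hex
        obtain ⟨a, ha⟩ := hex
        have haS : c (n+1) a = a + 1 := (hall a).resolve_left ha
        have hprop : ∀ j : Fin k, c (n+1) j = j + 1 → c (n+1) (j+1) = (j+1) + 1 := by
          intro j hj
          rcases hall (j+1) with h | h
          · exfalso
            have heq : j + 1 = j := hinj (n+1) (h.trans hj.symm)
            exact hs j heq
          · exact h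
        have hit : ∀ m : ℕ, c (n+1) (a + m) = (a + m) + 1 := by
          intro m
          induction m with
          | zero => simpa using haS
          | succ p ihp =>
            have := hprop (a + p) ihp
            have harr : a + (↑(p+1) : Fin k) = (a + p) + 1 := by
              push_cast; rw [add_assoc]
            rw [harr]; exact this
        have hallplus : ∀ j : Fin k, c (n+1) j = j + 1 := by
          intro j
          have : j = a + ((j - a : Fin k) : ℕ) := by
            simp
          rw [this]; exact hit _
        have hmem : ∀ j : Fin k, j ∈ moved := by
          intro j
          by_contra hj
          have := hfix j hj
          rw [hid, hallplus j] at this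
          exact hs j this
        have : moved = Finset.univ := Finset.eq_univ_iff_forall.mpr hmem
        rw [this, Finset.card_univ, Fintype.card_fin] at hcard
        omega
  have hTid := key T le_rfl
  rw [hTid] at hT
  have h00 : (0 : Fin k) = 0 + 1 := congrFun hT 0
  rw [zero_add] at h00
  exact hone h00.symm
end
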